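/- arXiv:1705.08148 — 3 statements merged into one kernel-verified Lean document; each statement's English description precedes it below -/
import Mathlib

section
/- For any positive reals σ² and P, and L = ⌊P^α⌋ with α > 1/2, the limit as P → ∞ of (1/2)·log((P/(2L))·(sqrt(1 + 4L²/(σ² P)) - 1)) / log P equals 1/4. -/
open Real Filter

private lemma aux_lin (a b : ℝ) :
    Tendsto (fun P : ℝ => (a * Real.log P + b) / Real.log P) atTop (nhds a) := by
  have h1 : Tendsto (fun P : ℝ => a + b * (Real.log P)⁻¹) atTop (nhds (a + b * 0)) :=
    tendsto_const_nhds.add ((tendsto_inv_atTop_zero.comp Real.tendsto_log_atTop).const_mul b)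
  rw [mul_zero, add_zero] at h1
  refine h1.congr' ?_
  filter_upwards [eventually_gt_atTop 1] with P hP
  have hl : Real.log P ≠ 0 := ne_of_gt (Real.log_pos hP)
  field_simp

private lemma key_bounds (s α P : ℝ) (hs : 0 < s) (hP1 : 1 < P)
    (hPα : 2 ≤ P ^ α) (hP2α : s ≤ P ^ (2*α - 1)) :
    ((1/4) * Real.log P + (-(1/4)*Real.log s - (1/2)*Real.log 3)) / Real.log P ≤
      ((1/2) * Real.log ((P / (2 * (⌊P ^ α⌋ : ℝ))) *
        (Real.sqrt (1 + 4 * (⌊P ^ α⌋ : ℝ)^2 / (s * P)) - 1))) / Real.log P ∧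
    ((1/2) * Real.log ((P / (2 * (⌊P ^ α⌋ : ℝ))) *
        (Real.sqrt (1 + 4 * (⌊P ^ α⌋ : ℝ)^2 / (s * P)) - 1))) / Real.log P ≤
      ((1/4) * Real.log P + (-(1/4)*Real.log s)) / Real.log P := by
  have hP0 : (0:ℝ) < P := by linarith
  set ℓ : ℝ := (⌊P ^ α⌋ : ℝ) with hℓdef
  have hℓ1 : (1:ℝ) ≤ ℓ := by
    have h : (1:ℤ) ≤ ⌊P ^ α⌋ := Int.le_floor.mpr (by push_cast; linarith)
    rw [hℓdef]; exact_mod_cast h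
  have hℓ0 : (0:ℝ) < ℓ := by linarith
  have hℓlb : P ^ α / 2 ≤ ℓ := by
    have h := Int.sub_one_lt_floor (P ^ α)
    have h2 : P ^ α - 1 < ℓ := by rw [hℓdef]; exact_mod_cast h
    linarith
  have hrpow : P ^ α * P ^ α = P ^ (2*α - 1) * P := by
    have h1 := Real.rpow_add hP0 (2*α - 1) 1
    rw [Real.rpow_one] at h1
    rw [← h1, ← Real.rpow_add hP0]
    congr 1; ring
  have hsP : s * P ≤ P ^ α * P ^ α := by
    rw [hrpow]
    exact mul_le_mul_of_nonneg_right hP2α hP0.le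
  set y : ℝ := 4 * ℓ^2 / (s * P) with hydef
  have hsP0 : (0:ℝ) < s * P := by positivity
  have hy1 : (1:ℝ) ≤ y := by
    rw [hydef, le_div_iff₀ hsP0]
    nlinarith [sq_nonneg (P ^ α)]
  have hy0 : (0:ℝ) < y := by linarith
  set D : ℝ := Real.sqrt (1 + y) + 1 with hDdef
  have hD0 : (0:ℝ) < D := by positivity
  have hid : Real.sqrt (1 + y) - 1 = y / D := by
    have hsq : Real.sqrt (1 + y) * Real.sqrt (1 + y) = 1 + y :=
      Real.mul_self_sqrt (by linarith)
    rw [eq_div_iff hD0.ne', hDdef]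
    nlinarith [hsq]
  have h1 : P / (2*ℓ) * y = 2*ℓ/s := by
    rw [hydef]; field_simp; ring
  have hE : (P / (2 * ℓ)) * (Real.sqrt (1 + y) - 1) = (2 * ℓ / s) / D := by
    rw [hid, ← mul_div_assoc, h1]
  set t : ℝ := Real.sqrt y with htdef
  have ht1 : (1:ℝ) ≤ t := Real.one_le_sqrt.mpr hy1
  have ht0 : (0:ℝ) < t := by linarith
  have htsq : t * t = y := Real.mul_self_sqrt hy0.le
  have hDlb : t ≤ D := by
    have h := Real.sqrt_le_sqrt (show y ≤ 1 + y by linarith)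
    rw [hDdef]; rw [htdef]; linarith [h]
  have hDub : D ≤ 3 * t := by
    have h1 : Real.sqrt (1 + y) ≤ 1 + t := by
      have h2 : (1 + y) ≤ (1 + t)^2 := by nlinarith
      calc Real.sqrt (1 + y) ≤ Real.sqrt ((1+t)^2) := Real.sqrt_le_sqrt h2
        _ = 1 + t := Real.sqrt_sq (by linarith)
    rw [hDdef]; linarith
  have htval : t = 2 * ℓ / Real.sqrt (s * P) := by
    rw [htdef, hydef, Real.sqrt_div (by positivity) (s*P)]
    congr 1
    rw [show (4:ℝ) * ℓ^2 = (2*ℓ)^2 by ring, Real.sqrt_sq (by linarith)]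
  have hsqrtsP : (0:ℝ) < Real.sqrt (s * P) := Real.sqrt_pos.mpr hsP0
  have hElb : Real.sqrt (s * P) / (3 * s) ≤ (2 * ℓ / s) / D := by
    rw [div_le_div_iff₀ (by positivity) hD0]
    calc Real.sqrt (s*P) * D ≤ Real.sqrt (s*P) * (3*t) :=
          mul_le_mul_of_nonneg_left hDub hsqrtsP.le
      _ = 2 * ℓ / s * (3 * s) := by rw [htval]; field_simp
  have hEub : (2 * ℓ / s) / D ≤ Real.sqrt (s * P) / s := by
    rw [div_le_div_iff₀ hD0 hs]
    calc 2 * ℓ / s * s = Real.sqrt (s*P) * t := by rw [htval]; field_simp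
      _ ≤ Real.sqrt (s*P) * D := mul_le_mul_of_nonneg_left hDlb hsqrtsP.le
  have hE0 : (0:ℝ) < (2 * ℓ / s) / D := by positivity
  have hlogub : Real.log (Real.sqrt (s*P) / s) = (1/2)*Real.log P - (1/2)*Real.log s := by
    rw [Real.log_div (by positivity) hs.ne', Real.log_sqrt hsP0.le,
      Real.log_mul hs.ne' hP0.ne']
    ring
  have hloglb : Real.log (Real.sqrt (s*P) / (3*s))
      = (1/2)*Real.log P - (1/2)*Real.log s - Real.log 3 := by
    rw [Real.log_div (by positivity) (by positivity), Real.log_mul (by norm_num) hs.ne',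
      Real.log_sqrt hsP0.le, Real.log_mul hs.ne' hP0.ne']
    ring
  have hlogE_ub : Real.log ((2 * ℓ / s) / D) ≤ (1/2)*Real.log P - (1/2)*Real.log s := by
    rw [← hlogub]
    exact Real.log_le_log hE0 hEub
  have hlogE_lb : (1/2)*Real.log P - (1/2)*Real.log s - Real.log 3
      ≤ Real.log ((2 * ℓ / s) / D) := by
    rw [← hloglb]
    exact Real.log_le_log (by positivity) hElb
  have hlogP : (0:ℝ) < Real.log P := Real.log_pos hP1
  rw [show (1 + 4 * ℓ^2 / (s * P)) = 1 + y from by rw [hydef], hE]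
  constructor
  · gcongr ?_ / Real.log P
    linarith
  · gcongr ?_ / Real.log P
    linarith

theorem gdof_phase_high_alpha (s α : ℝ) (hs : 0 < s) (hα : 1/2 < α) :
    Filter.Tendsto
      (fun P : ℝ =>
        ((1/2) * Real.log ((P / (2 * (⌊P ^ α⌋ : ℝ))) *
          (Real.sqrt (1 + 4 * (⌊P ^ α⌋ : ℝ)^2 / (s * P)) - 1))) / Real.log P)
      Filter.atTop (nhds (1/4)) := by
  have hα0 : (0:ℝ) < α := by linarith
  have h2α1 : (0:ℝ) < 2*α - 1 := by linarith
  have key : ∀ᶠ P : ℝ in atTop,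
      ((1/4) * Real.log P + (-(1/4)*Real.log s - (1/2)*Real.log 3)) / Real.log P ≤
        ((1/2) * Real.log ((P / (2 * (⌊P ^ α⌋ : ℝ))) *
          (Real.sqrt (1 + 4 * (⌊P ^ α⌋ : ℝ)^2 / (s * P)) - 1))) / Real.log P ∧
      ((1/2) * Real.log ((P / (2 * (⌊P ^ α⌋ : ℝ))) *
          (Real.sqrt (1 + 4 * (⌊P ^ α⌋ : ℝ)^2 / (s * P)) - 1))) / Real.log P ≤
        ((1/4) * Real.log P + (-(1/4)*Real.log s)) / Real.log P := by
    filter_upwards [eventually_gt_atTop 1,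
      (tendsto_rpow_atTop hα0).eventually_ge_atTop 2,
      (tendsto_rpow_atTop h2α1).eventually_ge_atTop s] with P hP1 hPα hP2α
    exact key_bounds s α P hs hP1 hPα hP2α
  exact tendsto_of_tendsto_of_tendsto_of_le_of_le'
    (aux_lin (1/4) (-(1/4)*Real.log s - (1/2)*Real.log 3))
    (aux_lin (1/4) (-(1/4)*Real.log s))
    (key.mono fun P h => h.1) (key.mono fun P h => h.2)
end

section
/- For any positive reals σ² and P, and L = ⌊P^α⌋ with 0 ≤ α < 1/2, the limit as P → ∞ of (1/2)·log((P/(2L))·(sqrt(1 + 4L²/(σ² P)) - 1)) / log P equals α/2. -/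
open Real Filter

theorem gdof_phase_low_alpha (s α : ℝ) (hs : 0 < s) (hα0 : 0 ≤ α) (hα : α < 1/2) :
    Filter.Tendsto
      (fun P : ℝ =>
        ((1/2) * Real.log ((P / (2 * (⌊P ^ α⌋ : ℝ))) *
          (Real.sqrt (1 + 4 * (⌊P ^ α⌋ : ℝ)^2 / (s * P)) - 1))) / Real.log P)
      Filter.atTop (nhds (α / 2)) := by
  set L : ℝ → ℝ := fun P => ((⌊P ^ α⌋ : ℤ) : ℝ) with hLdef
  set x : ℝ → ℝ := fun P => 4 * (L P) ^ 2 / (s * P) with hxdef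
  -- basic bounds on L
  have hL_ge : ∀ P : ℝ, 1 ≤ P → 1 ≤ L P := by
    intro P hP
    have h1 : (1 : ℝ) ≤ P ^ α := by
      simpa using Real.rpow_le_rpow_of_exponent_le hP hα0
    have h2 : (1 : ℤ) ≤ ⌊P ^ α⌋ := Int.le_floor.mpr (by exact_mod_cast h1)
    show (1 : ℝ) ≤ ((⌊P ^ α⌋ : ℤ) : ℝ)
    exact_mod_cast h2
  have hL_le : ∀ P : ℝ, L P ≤ P ^ α := fun P => Int.floor_le _
  -- x tends to 0
  have hx0 : Tendsto x atTop (nhds 0) := by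
    have hup : Tendsto (fun P : ℝ => (4 / s) * P ^ (2 * α - 1)) atTop (nhds 0) := by
      have h := (tendsto_rpow_neg_atTop (show (0:ℝ) < 1 - 2 * α by linarith)).const_mul (4 / s)
      simp only [mul_zero] at h
      convert h using 2 with P
      ring_nf
    apply tendsto_of_tendsto_of_tendsto_of_le_of_le' tendsto_const_nhds hup
    · filter_upwards [eventually_ge_atTop (1 : ℝ)] with P hP
      have hL := hL_ge P hP
      positivity
    · filter_upwards [eventually_ge_atTop (1 : ℝ)] with P hP
      have hP0 : (0 : ℝ) < P := by linarith
      have hL1 := hL_ge P hP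
      have hLle := hL_le P
      have h1 : (L P) ^ 2 ≤ P ^ (2 * α) := by
        have : (L P) ^ 2 ≤ (P ^ α) ^ 2 := by nlinarith
        calc (L P) ^ 2 ≤ (P ^ α) ^ 2 := this
          _ = P ^ (2 * α) := by
              rw [← Real.rpow_natCast (P ^ α) 2, ← Real.rpow_mul hP0.le]
              ring_nf
      have h2 : x P ≤ 4 * P ^ (2 * α) / (s * P) := by
        apply div_le_div_of_nonneg_right ?_ (by positivity)
        · linarith
      calc x P ≤ 4 * P ^ (2 * α) / (s * P) := h2
        _ = (4 / s) * P ^ (2 * α - 1) := by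
            rw [Real.rpow_sub hP0, Real.rpow_one]
            field_simp
  -- sqrt(1+x)+1 tends to 2 and its log tends to log 2
  have hS2 : Tendsto (fun P => Real.sqrt (1 + x P) + 1) atTop (nhds 2) := by
    have h1 : Tendsto (fun P => (1 : ℝ) + x P) atTop (nhds 1) := by
      simpa using tendsto_const_nhds.add hx0
    have h2 := h1.sqrt
    rw [Real.sqrt_one] at h2
    have h3 := h2.add (tendsto_const_nhds : Tendsto (fun _ : ℝ => (1:ℝ)) atTop (nhds 1))
    norm_num at h3
    exact h3
  have hlogS : Tendsto (fun P => Real.log (Real.sqrt (1 + x P) + 1)) atTop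
      (nhds (Real.log 2)) :=
    ((Real.continuousAt_log (by norm_num)).tendsto).comp hS2
  -- log L / log P tends to α
  have hT1 : Tendsto (fun P => Real.log (L P) / Real.log P) atTop (nhds α) := by
    have hlow : Tendsto (fun P : ℝ => α - Real.log 2 * (Real.log P)⁻¹) atTop (nhds α) := by
      have := (Real.tendsto_log_atTop.inv_tendsto_atTop).const_mul (Real.log 2)
      simpa using tendsto_const_nhds.sub this
    apply tendsto_of_tendsto_of_tendsto_of_le_of_le' hlow tendsto_const_nhds
    · filter_upwards [eventually_ge_atTop (2 : ℝ)] with P hP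
      have hP1 : (1 : ℝ) < P := by linarith
      have hlogP : 0 < Real.log P := Real.log_pos hP1
      have hPα1 : (1 : ℝ) ≤ P ^ α := by
        simpa using Real.rpow_le_rpow_of_exponent_le hP1.le hα0
      have hL1 := hL_ge P hP1.le
      have key : α * Real.log P - Real.log 2 ≤ Real.log (L P) := by
        rcases le_or_gt 2 (P ^ α) with h2 | h2
        · have hfl : P ^ α - 1 < L P := Int.sub_one_lt_floor _
          have hhalf : P ^ α / 2 ≤ L P := by linarith
          have := Real.log_le_log (by positivity) hhalf
          rw [Real.log_div (by positivity) (by norm_num),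
            Real.log_rpow (by linarith : (0:ℝ) < P)] at this
          linarith
        · have : α * Real.log P < Real.log 2 := by
            have := Real.log_lt_log (by linarith : (0:ℝ) < P ^ α) h2
            rwa [Real.log_rpow (by linarith : (0:ℝ) < P)] at this
          have hlogL : 0 ≤ Real.log (L P) := Real.log_nonneg hL1
          linarith
      rw [le_div_iff₀ hlogP]
      have heq : (α - Real.log 2 * (Real.log P)⁻¹) * Real.log P
          = α * Real.log P - Real.log 2 := by field_simp
      linarith [key, heq.le, heq.ge]
    · filter_upwards [eventually_ge_atTop (2 : ℝ)] with P hP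
      have hP1 : (1 : ℝ) < P := by linarith
      have hlogP : 0 < Real.log P := Real.log_pos hP1
      have hL1 := hL_ge P hP1.le
      have hup : Real.log (L P) ≤ α * Real.log P := by
        have := Real.log_le_log (by linarith) (hL_le P)
        rwa [Real.log_rpow (by linarith : (0:ℝ) < P)] at this
      rw [div_le_iff₀ hlogP]
      linarith
  -- inverse log tends to 0
  have hinv : Tendsto (fun P : ℝ => (Real.log P)⁻¹) atTop (nhds 0) :=
    Real.tendsto_log_atTop.inv_tendsto_atTop
  -- the model function
  have hmodel : Tendsto (fun P =>
      Real.log (L P) / Real.log P * (1 / 2) +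
        (Real.log 2 - (Real.log s + Real.log (Real.sqrt (1 + x P) + 1))) *
          (Real.log P)⁻¹ * (1 / 2)) atTop (nhds (α / 2)) := by
    have hc1 : Tendsto (fun _ : ℝ => Real.log 2) atTop (nhds (Real.log 2)) :=
      tendsto_const_nhds
    have hc2 : Tendsto (fun _ : ℝ => Real.log s) atTop (nhds (Real.log s)) :=
      tendsto_const_nhds
    have h := (hT1.mul_const (1 / 2)).add
      (((hc1.sub (hc2.add hlogS)).mul hinv).mul_const (1 / 2))
    convert h using 2
    ring
  -- eventual equality
  apply hmodel.congr'
  filter_upwards [eventually_ge_atTop (2 : ℝ)] with P hP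
  have hP1 : (1 : ℝ) < P := by linarith
  have hP0 : (0 : ℝ) < P := by linarith
  have hlogP : 0 < Real.log P := Real.log_pos hP1
  have hL1 : 1 ≤ L P := hL_ge P hP1.le
  have hL0 : 0 < L P := by linarith
  have hx_pos : 0 < x P := by positivity
  set S := Real.sqrt (1 + x P) with hSdef
  have hS1 : 1 ≤ S := by
    rw [hSdef]
    rw [show (1:ℝ) = Real.sqrt 1 by simp]
    exact Real.sqrt_le_sqrt (by simp [Real.sqrt_one]; linarith)
  have hSsq : S ^ 2 = 1 + x P := Real.sq_sqrt (by linarith)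
  have hSm1 : S - 1 = x P / (S + 1) := by
    rw [eq_div_iff (by linarith)]
    nlinarith [hSsq]
  have hinner : P / (2 * L P) * (Real.sqrt (1 + 4 * (L P) ^ 2 / (s * P)) - 1)
      = 2 * L P / (s * (S + 1)) := by
    have : Real.sqrt (1 + 4 * (L P) ^ 2 / (s * P)) = S := rfl
    rw [this, hSm1, hxdef]
    field_simp
    ring
  have hlog : Real.log (2 * L P / (s * (S + 1)))
      = Real.log 2 + Real.log (L P) - (Real.log s + Real.log (S + 1)) := by
    rw [Real.log_div (by positivity) (by positivity),
      Real.log_mul (by norm_num) (by positivity),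
      Real.log_mul (ne_of_gt hs) (by positivity)]
  show Real.log (L P) / Real.log P * (1 / 2) +
        (Real.log 2 - (Real.log s + Real.log (S + 1))) * (Real.log P)⁻¹ * (1 / 2)
      = (1 / 2) * Real.log (P / (2 * L P) *
          (Real.sqrt (1 + 4 * (L P) ^ 2 / (s * P)) - 1)) / Real.log P
  rw [hinner, hlog]
  field_simp
  ring
end

section
/- For fixed σ² > 0 and L = ⌊P^α⌋ with α > 1/2, the outer bound of the new theorem improves on the old one, in the sense that (1/2)log(L/σ²) - (1/2)log((P/L)(sqrt(1+4L²/(σ²P))-1)) → ∞ as P → ∞. -/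
open Real Filter

theorem new_bound_improves (s α : ℝ) (hs : 0 < s) (hα : 1/2 < α) :
    Filter.Tendsto
      (fun P : ℝ =>
        (1/2) * Real.log ((⌊P ^ α⌋ : ℝ) / s) -
        (1/2) * Real.log ((P / (⌊P ^ α⌋ : ℝ)) *
          (Real.sqrt (1 + 4 * (⌊P ^ α⌋ : ℝ)^2 / (s * P)) - 1)))
      Filter.atTop Filter.atTop := by
  have hα0 : (0:ℝ) < α := lt_trans (by norm_num) hα
  -- the auxiliary function
  have hxlim : Tendsto (fun P : ℝ => 4 * (⌊P ^ α⌋ : ℝ)^2 / (s * P)) atTop atTop := by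
    have hpow : Tendsto (fun P : ℝ => P ^ (2*α - 1) / s) atTop atTop :=
      (tendsto_rpow_atTop (by linarith)).atTop_div_const hs
    apply tendsto_atTop_mono' atTop _ hpow
    have h2 : Tendsto (fun P : ℝ => P ^ α) atTop atTop := tendsto_rpow_atTop hα0
    filter_upwards [eventually_ge_atTop (1:ℝ), h2.eventually_ge_atTop 2] with P hP1 hP2
    have hP0 : (0:ℝ) < P := by linarith
    have hL : P ^ α / 2 ≤ (⌊P ^ α⌋ : ℝ) := by
      have := Int.sub_one_lt_floor (P ^ α)
      linarith
    have hL0 : (0:ℝ) ≤ P ^ α / 2 := by positivity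
    have hsq : (P ^ α)^2 / 4 ≤ (⌊P ^ α⌋ : ℝ)^2 := by
      have := mul_self_le_mul_self hL0 hL
      nlinarith
    have hrw : (P ^ α)^2 = P ^ (2*α) := by
      rw [← Real.rpow_natCast (P ^ α) 2, ← Real.rpow_mul (le_of_lt hP0)]
      norm_num; ring_nf
    have hrw2 : P ^ (2*α - 1) = P ^ (2*α) / P := by
      rw [Real.rpow_sub hP0, Real.rpow_one]
    rw [hrw2, div_div, div_le_div_iff₀ (by positivity) (by positivity)]
    rw [hrw] at hsq
    nlinarith [mul_le_mul_of_nonneg_right hsq (le_of_lt (mul_pos hs hP0))]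
  have hglim : Tendsto (fun P : ℝ =>
      (1/2) * Real.log ((Real.sqrt (1 + 4 * (⌊P ^ α⌋ : ℝ)^2 / (s * P)) + 1) / 4))
      atTop atTop := by
    apply Tendsto.const_mul_atTop (by norm_num : (0:ℝ) < 1/2)
    apply Real.tendsto_log_atTop.comp
    apply Tendsto.atTop_div_const (by norm_num : (0:ℝ) < 4)
    apply tendsto_atTop_add_const_right
    have hsqrt : Tendsto Real.sqrt atTop atTop := by
      apply (tendsto_rpow_atTop (by norm_num : (0:ℝ) < 1/2)).congr
      exact fun x => (Real.sqrt_eq_rpow x).symm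
    exact hsqrt.comp (tendsto_atTop_add_const_left _ 1 hxlim)
  apply hglim.congr'
  have h2 : Tendsto (fun P : ℝ => P ^ α) atTop atTop := tendsto_rpow_atTop hα0
  filter_upwards [eventually_ge_atTop (1:ℝ), h2.eventually_ge_atTop 1] with P hP1 hP2
  have hP0 : (0:ℝ) < P := by linarith
  set L : ℝ := (⌊P ^ α⌋ : ℝ) with hLdef
  have hL1 : (1:ℝ) ≤ L := by
    have : (1:ℤ) ≤ ⌊P ^ α⌋ := Int.le_floor.mpr (by exact_mod_cast hP2)
    rw [hLdef]; exact_mod_cast this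
  have hL0 : (0:ℝ) < L := lt_of_lt_of_le one_pos hL1
  set x : ℝ := 4 * L^2 / (s * P) with hxdef
  have hx0 : 0 < x := by positivity
  set y : ℝ := Real.sqrt (1 + x) with hydef
  have hy2 : y^2 = 1 + x := Real.sq_sqrt (by positivity)
  have hy1 : 1 < y := by
    rw [hydef]
    have : Real.sqrt 1 < Real.sqrt (1 + x) :=
      Real.sqrt_lt_sqrt (by norm_num) (by linarith)
    simpa using this
  have key : (P / L) * (y - 1) = (L / s) / ((y + 1) / 4) := by
    have hsp : s * P ≠ 0 := by positivity
    have hy1' : y + 1 ≠ 0 := by linarith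
    field_simp
    have : y^2 * (s*P) = s*P + 4*L^2 := by
      rw [hy2, hxdef]; field_simp
    nlinarith [this]
  have hln := Real.log_div (show L/s ≠ 0 by positivity) (show (y+1)/4 ≠ 0 by positivity)
  rw [key, hln]
  ring
end
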